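/- Let X = (X₁,…,X_d) be a random vector whose joint distribution function F is a MEV distribution with unit Fréchet marginals, and set l(x₁,…,x_d) = −log F(x₁,…,x_d). Then for all x₁,…,x_d > 0, E( ( F₁(X₁)^{x₁} ∨ … ∨ F_d(X_d)^{x_d} )² ) = l(x₁,…,x_d) / ( 2 + l(x₁,…,x_d) ). -/

import Mathlib

open MeasureTheory Filter Finset

/-- The joint distribution function of the random vector `X` under `μ`. -/
noncomputable def jointCDF {Ω : Type*} [MeasurableSpace Ω] (μ : Measure Ω) {d : ℕ}
    (X : Fin d → Ω → ℝ) (x : Fin d → ℝ) : ℝ :=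
  (μ {ω | ∀ i, X i ω ≤ x i}).toReal

/-- The marginal distribution function of the `i`-th coordinate of `X` under `μ`. -/
noncomputable def margCDF {Ω : Type*} [MeasurableSpace Ω] (μ : Measure Ω) {d : ℕ}
    (X : Fin d → Ω → ℝ) (i : Fin d) (u : ℝ) : ℝ :=
  (μ {ω | X i ω ≤ u}).toReal

/-- `l^{(I₁,I₂)}(x,y) = -log F(a₁,…,a_d)` where `aᵢ = x` on `I₁`, `aᵢ = y` on `I₂` and
`aᵢ = ∞` otherwise (taking the limit of `F` in those arguments, i.e. dropping the
corresponding constraints). -/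
noncomputable def mevL {Ω : Type*} [MeasurableSpace Ω] (μ : Measure Ω) {d : ℕ}
    (X : Fin d → Ω → ℝ) (I₁ I₂ : Finset (Fin d)) (x y : ℝ) : ℝ :=
  -Real.log (μ {ω | (∀ i ∈ I₁, X i ω ≤ x) ∧ (∀ j ∈ I₂, X j ω ≤ y)}).toReal

/-- The extremal coefficient `ε_I = l^{(I,∅)}(1,1)` of the sub-vector `X_I`. -/
noncomputable def extCoef {Ω : Type*} [MeasurableSpace Ω] (μ : Measure Ω) {d : ℕ}
    (X : Fin d → Ω → ℝ) (I : Finset (Fin d)) : ℝ :=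
  mevL μ X I ∅ 1 1

/-- `M(I) = max_{i ∈ I} F_i(X_i)`. -/
noncomputable def Msub {Ω : Type*} [MeasurableSpace Ω] (μ : Measure Ω) {d : ℕ}
    (X : Fin d → Ω → ℝ) (I : Finset (Fin d)) (hI : I.Nonempty) (ω : Ω) : ℝ :=
  I.sup' hI fun i => margCDF μ X i (X i ω)

/-- The stable tail dependence function `l(x₁,…,x_d) = -log F(x₁,…,x_d)`. -/
noncomputable def stdf {Ω : Type*} [MeasurableSpace Ω] (μ : Measure Ω) {d : ℕ}
    (X : Fin d → Ω → ℝ) (x : Fin d → ℝ) : ℝ :=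
  -Real.log (jointCDF μ X x)

/-- `X` has a multivariate extreme value (max-stable) distribution with unit Fréchet
marginals under the probability measure `μ`. -/
structure IsMEVFrechet {Ω : Type*} [MeasurableSpace Ω] (μ : Measure Ω) {d : ℕ}
    (X : Fin d → Ω → ℝ) : Prop where
  meas : ∀ i, Measurable (X i)
  frechet : ∀ i, ∀ u : ℝ, 0 < u → margCDF μ X i u = Real.exp (-u⁻¹)
  maxStable : ∀ t : ℝ, 0 < t → ∀ x : Fin d → ℝ, (∀ i, 0 < x i) →
    jointCDF μ X (fun i => t * x i) ^ t = jointCDF μ X x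

/-! `Y = maxᵢ Fᵢ(Xᵢ) ^ xᵢ = maxᵢ exp (-xᵢ / Xᵢ)` satisfies `{Y ≤ s} = {X ≤ x / (-log s)}` almost
surely for `0 < s < 1`, so max-stability gives `P(Y ≤ s) = F(x) ^ (-log s) = s ^ l` with
`l = l(x)`. By the layer-cake formula, `E(Y ^ p) = ∫₀¹ (1 - t ^ (l / p)) dt = l / (l + p)`. -/

theorem integral_one_sub_rpow {q : ℝ} (hq : -1 < q) :
    ∫ t in (0 : ℝ)..1, (1 - t ^ q) = q / (q + 1) := by
  have hq' : q + 1 ≠ 0 := by linarith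
  rw [intervalIntegral.integral_sub intervalIntegrable_const
      (intervalIntegral.intervalIntegrable_rpow' hq), intervalIntegral.integral_const,
    integral_rpow (Or.inl hq), Real.one_rpow, Real.zero_rpow hq', smul_eq_mul]
  field_simp
  ring

theorem rpow_neg_log_comm {a b : ℝ} (ha : 0 < a) (hb : 0 < b) :
    a ^ (-Real.log b) = b ^ (-Real.log a) := by
  rw [Real.rpow_def_of_pos ha, Real.rpow_def_of_pos hb]
  ring_nf

theorem exp_neg_inv_rpow_le_iff {u a s : ℝ} (hu : 0 < u) (hs : s ∈ Set.Ioo 0 1) :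
    Real.exp (-u⁻¹) ^ a ≤ s ↔ u ≤ (-Real.log s)⁻¹ * a := by
  have hr : 0 < -Real.log s := neg_pos.2 (Real.log_neg hs.1 hs.2)
  rw [← Real.exp_mul, ← Real.le_log_iff_exp_le hs.1, inv_mul_eq_div, le_div_iff₀ hr,
    neg_mul, neg_le, inv_mul_eq_div, le_div_iff₀ hu, mul_comm]

theorem one_sub_sum_measureReal_compl_le_iInter {Ω ι : Type*} [MeasurableSpace Ω] [Fintype ι]
    {μ : Measure Ω} [IsProbabilityMeasure μ] (A : ι → Set Ω) :
    1 - ∑ i, μ.real (A i)ᶜ ≤ μ.real (⋂ i, A i) := by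
  have hcover : μ.real Set.univ ≤ μ.real (⋂ i, A i) + μ.real (⋂ i, A i)ᶜ := by
    rw [← Set.union_compl_self (⋂ i, A i)]
    exact measureReal_union_le _ _
  have hunion : μ.real (⋂ i, A i)ᶜ ≤ ∑ i, μ.real (A i)ᶜ := by
    rw [Set.compl_iInter]
    exact measureReal_iUnion_fintype_le _
  rw [probReal_univ] at hcover
  linarith

section LayerCake

variable {Ω : Type*} [MeasurableSpace Ω] {μ : Measure Ω} [IsProbabilityMeasure μ] {Y : Ω → ℝ}
  {l p : ℝ}

theorem measureReal_lt_rpow_eq_indicator (hYm : Measurable Y)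
    (hY : ∀ᵐ ω ∂μ, Y ω ∈ Set.Icc 0 1)
    (hcdf : ∀ s ∈ Set.Ioo (0 : ℝ) 1, μ.real {ω | Y ω ≤ s} = s ^ l) (hp : 0 < p)
    {t : ℝ} (ht : 0 < t) :
    μ.real {ω | t < Y ω ^ p} = (Set.Iio 1).indicator (fun t => 1 - t ^ (l / p)) t := by
  rcases lt_or_ge t 1 with ht1 | ht1
  · have hroot : t ^ p⁻¹ ∈ Set.Ioo (0 : ℝ) 1 :=
      ⟨Real.rpow_pos_of_pos ht _, Real.rpow_lt_one ht.le ht1 (inv_pos.2 hp)⟩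
    have hae : {ω | t < Y ω ^ p} =ᵐ[μ] ({ω | Y ω ≤ t ^ p⁻¹}ᶜ : Set Ω) := by
      rw [Filter.eventuallyEq_set]
      filter_upwards [hY] with ω hω
      simp only [Set.mem_ofPred_eq, Set.mem_compl_iff, not_le]
      exact (Real.rpow_inv_lt_iff_of_pos ht.le hω.1 hp).symm
    rw [Set.indicator_of_mem (Set.mem_Iio.2 ht1), measureReal_congr hae,
      probReal_compl_eq_one_sub (measurableSet_le hYm measurable_const), hcdf _ hroot,
      ← Real.rpow_mul ht.le, inv_mul_eq_div]
  · rw [Set.indicator_of_notMem (Set.notMem_Iio.2 ht1), measureReal_eq_zero_iff]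
    refine measure_mono_null ?_ (ae_iff.1 hY)
    intro ω hω hmem
    exact not_lt_of_ge (Real.rpow_le_one hmem.1 hmem.2 hp.le) (ht1.trans_lt hω)

theorem integral_rpow_eq_of_measureReal_le_eq_rpow (hYm : Measurable Y)
    (hY : ∀ᵐ ω ∂μ, Y ω ∈ Set.Icc 0 1) (hl : 0 ≤ l)
    (hcdf : ∀ s ∈ Set.Ioo (0 : ℝ) 1, μ.real {ω | Y ω ≤ s} = s ^ l) (hp : 0 < p) :
    ∫ ω, Y ω ^ p ∂μ = l / (l + p) := by
  have hint : Integrable (fun ω => Y ω ^ p) μ := by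
    refine (integrable_const (1 : ℝ)).mono' (hYm.pow_const p).aestronglyMeasurable ?_
    filter_upwards [hY] with ω hω
    rw [Real.norm_of_nonneg (Real.rpow_nonneg hω.1 p)]
    exact Real.rpow_le_one hω.1 hω.2 hp.le
  have hnonneg : 0 ≤ᵐ[μ] fun ω => Y ω ^ p := by
    filter_upwards [hY] with ω hω
    exact Real.rpow_nonneg hω.1 p
  rw [hint.integral_eq_integral_meas_lt hnonneg,
    setIntegral_congr_fun measurableSet_Ioi
      fun t ht => measureReal_lt_rpow_eq_indicator hYm hY hcdf hp ht,
    setIntegral_indicator measurableSet_Iio, Set.Ioi_inter_Iio,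
    ← integral_Ioc_eq_integral_Ioo, ← intervalIntegral.integral_of_le zero_le_one,
    integral_one_sub_rpow (by linarith [div_nonneg hl hp.le])]
  field_simp

end LayerCake

theorem margCDF_mono {Ω : Type*} [MeasurableSpace Ω] (μ : Measure Ω) [IsFiniteMeasure μ] {d : ℕ}
    (X : Fin d → Ω → ℝ) (i : Fin d) : Monotone (margCDF μ X i) :=
  fun _ _ huv => measureReal_mono fun _ hω => le_trans hω huv

theorem margCDF_le_one {Ω : Type*} [MeasurableSpace Ω] (μ : Measure Ω) [IsProbabilityMeasure μ]
    {d : ℕ} (X : Fin d → Ω → ℝ) (i : Fin d) (u : ℝ) : margCDF μ X i u ≤ 1 :=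
  measureReal_le_one

theorem stdf_nonneg {Ω : Type*} [MeasurableSpace Ω] (μ : Measure Ω) [IsProbabilityMeasure μ]
    {d : ℕ} (X : Fin d → Ω → ℝ) (x : Fin d → ℝ) : 0 ≤ stdf μ X x :=
  neg_nonneg.2 (Real.log_nonpos measureReal_nonneg measureReal_le_one)

section MaxOfMarginals

variable {Ω : Type*} [MeasurableSpace Ω] {μ : Measure Ω} {d : ℕ} {X : Fin d → Ω → ℝ}
  {x : Fin d → ℝ}

theorem measurable_sup'_margCDF_rpow [IsFiniteMeasure μ] (hX : ∀ i, Measurable (X i))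
    (hne : (univ : Finset (Fin d)).Nonempty) :
    Measurable fun ω => univ.sup' hne fun i => margCDF μ X i (X i ω) ^ x i := by
  convert Finset.measurable_sup' hne (f := fun i ω => margCDF μ X i (X i ω) ^ x i)
    fun i _ => ((margCDF_mono μ X i).measurable.comp (hX i)).pow_const (x i) using 1
  ext ω
  rw [Finset.sup'_apply]

theorem sup'_margCDF_rpow_mem_Icc [IsProbabilityMeasure μ] (hx : ∀ i, 0 ≤ x i)
    (hne : (univ : Finset (Fin d)).Nonempty) (ω : Ω) :
    univ.sup' hne (fun i => margCDF μ X i (X i ω) ^ x i) ∈ Set.Icc 0 1 := by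
  obtain ⟨i₀, hi₀⟩ := hne
  exact ⟨(Real.rpow_nonneg measureReal_nonneg _).trans
      (le_sup' (fun i => margCDF μ X i (X i ω) ^ x i) hi₀),
    Finset.sup'_le _ _ fun i _ =>
      Real.rpow_le_one measureReal_nonneg (margCDF_le_one μ X i _) (hx i)⟩

end MaxOfMarginals

namespace IsMEVFrechet

variable {Ω : Type*} [MeasurableSpace Ω] {μ : Measure Ω} {d : ℕ} {X : Fin d → Ω → ℝ}
  {x : Fin d → ℝ}

theorem ae_pos [IsFiniteMeasure μ] (hX : IsMEVFrechet μ X) : ∀ᵐ ω ∂μ, ∀ i, 0 < X i ω := by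
  refine ae_all_iff.2 fun i => ?_
  have hle : ∀ u > 0, μ.real {ω | X i ω ≤ 0} ≤ Real.exp (-u⁻¹) := fun u hu =>
    hX.frechet i u hu ▸ measureReal_mono fun ω hω => le_trans hω hu.le
  have hlim : Tendsto (fun u : ℝ => Real.exp (-u⁻¹)) (nhdsWithin 0 (Set.Ioi 0)) (nhds 0) :=
    Real.tendsto_exp_neg_atTop_nhds_zero.comp tendsto_inv_nhdsGT_zero
  have hzero : μ.real {ω | X i ω ≤ 0} = 0 :=
    le_antisymm (ge_of_tendsto hlim (eventually_nhdsWithin_of_forall hle)) measureReal_nonneg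
  simpa only [ae_iff, not_lt] using (measureReal_eq_zero_iff (measure_ne_top _ _)).1 hzero

theorem jointCDF_inv_mul (hX : IsMEVFrechet μ X) (hx : ∀ i, 0 < x i) {r : ℝ} (hr : 0 < r) :
    jointCDF μ X (fun i => r⁻¹ * x i) = jointCDF μ X x ^ r := by
  rw [← hX.maxStable r⁻¹ (inv_pos.2 hr) x hx, ← Real.rpow_mul (by exact measureReal_nonneg),
    inv_mul_cancel₀ hr.ne', Real.rpow_one]

/-- Union bound: `F(t • x) > 0` once `t > ∑ 1 / xᵢ`, and `F(x) = F(t • x) ^ t`. -/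
theorem jointCDF_pos [IsProbabilityMeasure μ] (hX : IsMEVFrechet μ X) (hx : ∀ i, 0 < x i) :
    0 < jointCDF μ X x := by
  set t := ∑ i, (x i)⁻¹ + 1
  have ht : 0 < t := by
    linarith [Finset.sum_nonneg fun i (_ : i ∈ univ) => (inv_pos.2 (hx i)).le]
  have htail : ∀ i, μ.real {ω | X i ω ≤ t * x i}ᶜ ≤ (t * x i)⁻¹ := fun i => by
    rw [probReal_compl_eq_one_sub (measurableSet_le (hX.meas i) measurable_const),
      show μ.real {ω | X i ω ≤ t * x i} = _ from hX.frechet i _ (mul_pos ht (hx i))]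
    linarith [Real.add_one_le_exp (-(t * x i)⁻¹)]
  have hsum : ∑ i, (t * x i)⁻¹ < 1 := by
    simp_rw [mul_inv, ← Finset.mul_sum]
    rw [inv_mul_lt_one₀ ht]
    linarith
  have hscaled : 0 < jointCDF μ X (fun i => t * x i) := by
    have := one_sub_sum_measureReal_compl_le_iInter (μ := μ) fun i => {ω | X i ω ≤ t * x i}
    rw [← Set.ofPred_forall] at this
    change 0 < μ.real {ω | ∀ i, X i ω ≤ t * x i}
    linarith [Finset.sum_le_sum fun i (_ : i ∈ univ) => htail i]
  rw [← hX.maxStable t ht x hx]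
  exact Real.rpow_pos_of_pos hscaled t

theorem measureReal_sup'_margCDF_rpow_le [IsProbabilityMeasure μ] (hX : IsMEVFrechet μ X)
    (hx : ∀ i, 0 < x i) (hne : (univ : Finset (Fin d)).Nonempty) {s : ℝ}
    (hs : s ∈ Set.Ioo 0 1) :
    μ.real {ω | univ.sup' hne (fun i => margCDF μ X i (X i ω) ^ x i) ≤ s} = s ^ stdf μ X x := by
  have hr : 0 < -Real.log s := neg_pos.2 (Real.log_neg hs.1 hs.2)
  have hae : {ω | univ.sup' hne (fun i => margCDF μ X i (X i ω) ^ x i) ≤ s}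
      =ᵐ[μ] {ω | ∀ i, X i ω ≤ (-Real.log s)⁻¹ * x i} := by
    rw [Filter.eventuallyEq_set]
    filter_upwards [hX.ae_pos] with ω hω
    simp only [Finset.sup'_le_iff, Finset.mem_univ, true_imp_iff,
      hX.frechet _ _ (hω _), exp_neg_inv_rpow_le_iff (hω _) hs]
  calc μ.real {ω | univ.sup' hne (fun i => margCDF μ X i (X i ω) ^ x i) ≤ s}
      = jointCDF μ X (fun i => (-Real.log s)⁻¹ * x i) := measureReal_congr hae
    _ = jointCDF μ X x ^ (-Real.log s) := hX.jointCDF_inv_mul hx hr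
    _ = s ^ stdf μ X x := rpow_neg_log_comm (hX.jointCDF_pos hx) hs.1

end IsMEVFrechet

/-- For a MEV distribution with unit Fréchet marginals and `l = -log F`,
`E((F₁(X₁)^{x₁} ∨ … ∨ F_d(X_d)^{x_d})²) = l(x₁,…,x_d)/(2 + l(x₁,…,x_d))`. -/
theorem statement14 {Ω : Type*} [MeasurableSpace Ω] (μ : Measure Ω) [IsProbabilityMeasure μ]
    {d : ℕ} (hd : 0 < d) (X : Fin d → Ω → ℝ) (hX : IsMEVFrechet μ X)
    (x : Fin d → ℝ) (hx : ∀ i, 0 < x i) :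
    (∫ ω, (Finset.univ.sup' ⟨⟨0, hd⟩, Finset.mem_univ _⟩
          (fun i => margCDF μ X i (X i ω) ^ x i)) ^ 2 ∂μ)
      = stdf μ X x / (2 + stdf μ X x) := by
  have hne : (univ : Finset (Fin d)).Nonempty := ⟨⟨0, hd⟩, Finset.mem_univ _⟩
  have h := integral_rpow_eq_of_measureReal_le_eq_rpow
    (measurable_sup'_margCDF_rpow hX.meas hne)
    (ae_of_all μ (sup'_margCDF_rpow_mem_Icc (fun i => (hx i).le) hne))
    (stdf_nonneg μ X x) (fun s hs => hX.measureReal_sup'_margCDF_rpow_le hx hne hs) two_pos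
  rw [add_comm] at h
  simpa only [Real.rpow_two] using h
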